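/- An element U ∈ D_{p,q} is invertible if and only if Det(U) ≠ 0, and in that case U⁻¹ = Adj(U)/Det(U), where Adj(U) := ∏_{∅ ≠ A ⊆ {1,…,n}} U^{(A)} is the product of all conjugates of U other than U itself. -/

import Mathlib

open Finset
open scoped symmDiff

noncomputable section

/-- Sign of the `i`-th generator: `+1` if `i < p`, `-1` otherwise. -/
def eps (p : ℕ) {n : ℕ} (i : Fin n) : ℝ := if (i : ℕ) < p then 1 else -1

lemma eps_mul_self (p : ℕ) {n : ℕ} (i : Fin n) : eps p i * eps p i = 1 := by
  unfold eps; split <;> norm_num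

/-- Structure constant `σ(A,B) = ∏_{i ∈ A ∩ B} ε_i`. -/
def sgn (p : ℕ) {n : ℕ} (A B : Finset (Fin n)) : ℝ := ∏ i ∈ A ∩ B, eps p i

/-- The commutative analogue of a Clifford algebra `D_{p,q}`, realized as the space of
coefficient functions on the basis `{e_A : A ⊆ {1,…,n}}`, `n = p + q`, with multiplication
`e_A e_B = σ(A,B) e_{A Δ B}`. -/
def Dl (p q : ℕ) : Type := Finset (Fin (p + q)) → ℝ

namespace Dl

variable {p q : ℕ}

instance : AddCommGroup (Dl p q) := Pi.addCommGroup
instance : Module ℝ (Dl p q) := Pi.module _ _ _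

/-- Multiplication: `(U·V)_C = ∑_{A Δ B = C} σ(A,B) U_A V_B`. -/
def mul' (U V : Dl p q) : Dl p q :=
  fun C => ∑ A : Finset (Fin (p + q)), sgn p A (A ∆ C) * U A * V (A ∆ C)

/-- The unit `1 = e_∅`. -/
def one' : Dl p q := fun A => if A = ∅ then 1 else 0

lemma sgn_empty_left {n : ℕ} (B : Finset (Fin n)) : sgn p ∅ B = 1 := by
  simp [sgn]

lemma sgn_empty_right {n : ℕ} (A : Finset (Fin n)) : sgn p A ∅ = 1 := by
  simp [sgn]

lemma sgn_prod_ite {n : ℕ} (X Y : Finset (Fin n)) :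
    sgn p X Y = ∏ i : Fin n, (if i ∈ X ∩ Y then eps p i else 1) := by
  rw [Finset.prod_ite_mem, Finset.univ_inter, sgn]

lemma sgn_cocycle {n : ℕ} (p : ℕ) (A B C : Finset (Fin n)) :
    sgn p B (B ∆ C) * sgn p A (A ∆ B) = sgn p A (A ∆ C) * sgn p (A ∆ B) (B ∆ C) := by
  rw [sgn_prod_ite, sgn_prod_ite, sgn_prod_ite, sgn_prod_ite,
    ← Finset.prod_mul_distrib, ← Finset.prod_mul_distrib]
  refine Finset.prod_congr rfl fun i _ => ?_
  by_cases hA : i ∈ A <;> by_cases hB : i ∈ B <;> by_cases hC : i ∈ C <;>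
    simp [Finset.mem_inter, Finset.mem_symmDiff, hA, hB, hC]

lemma sd_helper {n : ℕ} (A B C : Finset (Fin n)) : (A ∆ B) ∆ (A ∆ C) = B ∆ C := by
  rw [symmDiff_comm A B, symmDiff_assoc, symmDiff_symmDiff_cancel_left]

theorem mul_comm' (U V : Dl p q) : mul' U V = mul' V U := by
  funext C
  refine Fintype.sum_equiv
    (Function.Involutive.toPerm (fun A => A ∆ C)
      (show Function.Involutive (fun A => A ∆ C) from
        fun A => symmDiff_symmDiff_cancel_right C A)) _ _ fun A => ?_
  simp only [Function.Involutive.coe_toPerm]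
  rw [symmDiff_symmDiff_cancel_right]
  rw [show sgn p A (A ∆ C) = sgn p (A ∆ C) A by rw [sgn, sgn, Finset.inter_comm]]
  ring

theorem mul_assoc' (U V W : Dl p q) : mul' (mul' U V) W = mul' U (mul' V W) := by
  funext C
  show ∑ B : Finset (Fin (p+q)), sgn p B (B ∆ C) * (mul' U V) B * W (B ∆ C)
      = ∑ A : Finset (Fin (p+q)), sgn p A (A ∆ C) * U A * (mul' V W) (A ∆ C)
  unfold mul'
  simp only [Finset.sum_mul, Finset.mul_sum]
  rw [Finset.sum_comm]
  refine Finset.sum_congr rfl fun A _ => ?_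
  refine Fintype.sum_equiv
    (Function.Involutive.toPerm (fun B => A ∆ B)
      (show Function.Involutive (fun B => A ∆ B) from
        fun B => symmDiff_symmDiff_cancel_left A B)) _ _ fun B => ?_
  simp only [Function.Involutive.coe_toPerm]
  rw [sd_helper]
  have h := sgn_cocycle p A B C
  linear_combination (U A * V (A ∆ B) * W (B ∆ C)) * h

theorem one_mul' (U : Dl p q) : mul' one' U = U := by
  funext C
  unfold mul' one'
  rw [Finset.sum_eq_single (∅ : Finset (Fin (p+q)))]
  · simp [sgn_empty_left, bot_eq_empty.symm ▸ (bot_symmDiff C : (⊥ : Finset (Fin (p+q))) ∆ C = C)]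
  · intro A _ hA; simp [hA]
  · simp

theorem mul_one' (U : Dl p q) : mul' U one' = U := by
  funext C
  unfold mul' one'
  rw [Finset.sum_eq_single C]
  · simp [sgn, symmDiff_self, bot_eq_empty]
  · intro A _ hA
    have : A ∆ C ≠ ∅ := fun h =>
      hA (symmDiff_eq_bot.mp (by simpa [Finset.bot_eq_empty] using h))
    simp [this]
  · simp

theorem zero_mul' (U : Dl p q) : mul' 0 U = 0 := by
  funext C; unfold mul'
  simp [show ∀ A, (0 : Dl p q) A = 0 from fun _ => rfl]

theorem mul_zero' (U : Dl p q) : mul' U 0 = 0 := by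
  funext C; unfold mul'
  simp [show ∀ A, (0 : Dl p q) A = 0 from fun _ => rfl]

theorem left_distrib' (U V W : Dl p q) : mul' U (V + W) = mul' U V + mul' U W := by
  funext C
  show ∑ A : Finset (Fin (p+q)), sgn p A (A ∆ C) * U A * (V (A ∆ C) + W (A ∆ C))
      = mul' U V C + mul' U W C
  unfold mul'
  rw [← Finset.sum_add_distrib]
  exact Finset.sum_congr rfl fun A _ => by ring

theorem right_distrib' (U V W : Dl p q) : mul' (U + V) W = mul' U W + mul' V W := by
  funext C
  show ∑ A : Finset (Fin (p+q)), sgn p A (A ∆ C) * (U A + V A) * W (A ∆ C)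
      = mul' U W C + mul' V W C
  unfold mul'
  rw [← Finset.sum_add_distrib]
  exact Finset.sum_congr rfl fun A _ => by ring

instance : CommRing (Dl p q) :=
  { (inferInstance : AddCommGroup (Dl p q)) with
    mul := mul'
    one := one'
    left_distrib := left_distrib'
    right_distrib := right_distrib'
    zero_mul := zero_mul'
    mul_zero := mul_zero'
    mul_assoc := mul_assoc'
    one_mul := one_mul'
    mul_one := mul_one'
    mul_comm := mul_comm' }

lemma mul_def (U V : Dl p q) : U * V = mul' U V := rfl
lemma one_def : (1 : Dl p q) = one' := rfl

instance : Algebra ℝ (Dl p q) :=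
  Algebra.ofModule
    (fun r U V => by
      funext C
      show ∑ A : Finset (Fin (p+q)), sgn p A (A ∆ C) * (r * U A) * V (A ∆ C)
          = r * ∑ A : Finset (Fin (p+q)), sgn p A (A ∆ C) * U A * V (A ∆ C)
      rw [Finset.mul_sum]
      exact Finset.sum_congr rfl fun A _ => by ring)
    (fun r U V => by
      funext C
      show ∑ A : Finset (Fin (p+q)), sgn p A (A ∆ C) * U A * (r * V (A ∆ C))
          = r * ∑ A : Finset (Fin (p+q)), sgn p A (A ∆ C) * U A * V (A ∆ C)
      rw [Finset.mul_sum]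
      exact Finset.sum_congr rfl fun A _ => by ring)

/-- The coefficient of the basis element `e_A` in `U`. -/
def coeff (U : Dl p q) (A : Finset (Fin (p + q))) : ℝ := U A

/-- The basis element `e_A`. -/
def e (A : Finset (Fin (p + q))) : Dl p q := fun B => if B = A then 1 else 0

/-- The conjugation negating the generator `e_l`. -/
def conj (l : Fin (p + q)) (U : Dl p q) : Dl p q :=
  fun A => if l ∈ A then -U A else U A

/-- The superposition of the conjugations `(·)^{(i)}` over all `i ∈ S`:
it multiplies the coefficient of `e_B` by `(-1)^{|S ∩ B|}`. -/
def conjS (S : Finset (Fin (p + q))) (U : Dl p q) : Dl p q :=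
  fun B => (-1 : ℝ) ^ (S ∩ B).card * U B

/-- The regular (left multiplication) representation of `D_{p,q}`. -/
def rep (U : Dl p q) : Matrix (Finset (Fin (p + q))) (Finset (Fin (p + q))) ℝ :=
  fun C B => coeff (U * e B) C

/-- The determinant of an element of `D_{p,q}`. -/
def Det (U : Dl p q) : ℝ := (rep U).det

/-- The adjoint: product of all conjugates of `U` other than `U` itself. -/
def Adj (U : Dl p q) : Dl p q := ∏ A ∈ Finset.univ.erase (∅ : Finset (Fin (p + q))), conjS A U

end Dl

/-!
Over `ℂ`, `D_{p,q}` splits into `2 ^ n` copies of `ℂ`: for each `t ⊆ {1,…,n}` there is a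
character `χ_t` sending `e_i` to `±√ε_i`, with sign `-` exactly for `i ∈ t`. The character
table is, up to the factor `2 ^ n`, unitary, so the characters separate points and conjugate
the regular representation to `diag (χ_t U)`; hence `Det U = ∏_t χ_t U`. The conjugation
`U ↦ U^{(A)}` turns `χ_t` into `χ_{t Δ A}`, so `χ_t (U · Adj U) = ∏_A χ_{t Δ A} U = Det U`
for every `t`, i.e. `U · Adj U = Det U`. A unit has no character vanishing on it, so `Det U ≠ 0`.
-/

open ComplexConjugate
open scoped Matrix

section Characters

variable (p : ℕ) {n : ℕ}

def sqrtEps (i : Fin n) : ℂ := if (i : ℕ) < p then 1 else Complex.I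

def charOnGen (t : Finset (Fin n)) (i : Fin n) : ℂ :=
  if i ∈ t then -sqrtEps p i else sqrtEps p i

lemma charOnGen_mul_self (t : Finset (Fin n)) (i : Fin n) :
    charOnGen p t i * charOnGen p t i = eps p i := by
  unfold charOnGen sqrtEps eps
  split_ifs <;> simp

lemma charOnGen_mul_conj (t t' : Finset (Fin n)) (i : Fin n) :
    charOnGen p t i * conj (charOnGen p t' i) = if i ∈ t ∆ t' then -1 else 1 := by
  unfold charOnGen sqrtEps
  by_cases ht : i ∈ t <;> by_cases ht' : i ∈ t' <;> split_ifs <;>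
    simp_all [Finset.mem_symmDiff]

lemma charOnGen_symmDiff (t A : Finset (Fin n)) (i : Fin n) :
    charOnGen p (t ∆ A) i = (if i ∈ A then -1 else 1) * charOnGen p t i := by
  unfold charOnGen
  by_cases ht : i ∈ t <;> by_cases hA : i ∈ A <;> simp [Finset.mem_symmDiff, ht, hA]

def charOnBasis (t B : Finset (Fin n)) : ℂ := ∏ i ∈ B, charOnGen p t i

lemma charOnBasis_mul (t A B : Finset (Fin n)) :
    charOnBasis p t A * charOnBasis p t B = sgn p A B * charOnBasis p t (A ∆ B) := by
  simp only [charOnBasis, sgn, Complex.ofReal_prod]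
  rw [← Fintype.prod_ite_mem A, ← Fintype.prod_ite_mem B, ← Fintype.prod_ite_mem (A ∩ B),
    ← Fintype.prod_ite_mem (A ∆ B), ← Finset.prod_mul_distrib, ← Finset.prod_mul_distrib]
  refine Finset.prod_congr rfl fun i _ => ?_
  by_cases hA : i ∈ A <;> by_cases hB : i ∈ B <;>
    simp [Finset.mem_inter, Finset.mem_symmDiff, hA, hB, charOnGen_mul_self]

lemma charOnBasis_symmDiff (t A B : Finset (Fin n)) :
    charOnBasis p (t ∆ A) B = (-1) ^ (A ∩ B).card * charOnBasis p t B := by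
  simp only [charOnBasis, charOnGen_symmDiff, Finset.prod_mul_distrib, Finset.prod_ite_mem,
    Finset.prod_const, Finset.inter_comm]

lemma sum_charOnBasis_mul_conj (t t' : Finset (Fin n)) :
    ∑ B, charOnBasis p t B * conj (charOnBasis p t' B) = if t = t' then 2 ^ n else 0 := by
  simp only [charOnBasis, map_prod, ← Finset.prod_mul_distrib, charOnGen_mul_conj]
  rw [← Finset.powerset_univ, ← Finset.prod_add_one]
  split_ifs with h
  · simp [h]
    norm_num
  · obtain ⟨i, hi⟩ : (t ∆ t').Nonempty :=
      Finset.nonempty_iff_ne_empty.2 fun h' => h (symmDiff_eq_bot.1 h')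
    exact Finset.prod_eq_zero (Finset.mem_univ i) (by simp [hi])

def charMatrix (p n : ℕ) : Matrix (Finset (Fin n)) (Finset (Fin n)) ℂ :=
  Matrix.of (charOnBasis p)

lemma charMatrix_mul_conjTranspose :
    charMatrix p n * (charMatrix p n)ᴴ = (2 ^ n : ℂ) • 1 := by
  ext t t'
  simp [Matrix.mul_apply, charMatrix, sum_charOnBasis_mul_conj, Matrix.one_apply]

lemma det_charMatrix_ne_zero : (charMatrix p n).det ≠ 0 := by
  intro h
  have := congrArg Matrix.det (charMatrix_mul_conjTranspose p (n := n))
  rw [Matrix.det_mul, h, zero_mul, Matrix.det_smul, Matrix.det_one, mul_one] at this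
  exact pow_ne_zero _ (pow_ne_zero _ two_ne_zero) this.symm

end Characters

namespace Dl

variable {p q : ℕ}

@[simp] lemma zero_apply (B : Finset (Fin (p + q))) : (0 : Dl p q) B = 0 := rfl

@[simp] lemma add_apply (U V : Dl p q) (B : Finset (Fin (p + q))) : (U + V) B = U B + V B := rfl

@[simp] lemma smul_apply (c : ℝ) (U : Dl p q) (B : Finset (Fin (p + q))) :
    (c • U) B = c * U B := rfl

lemma mul_apply (U V : Dl p q) (C : Finset (Fin (p + q))) :
    (U * V) C = ∑ A, sgn p A (A ∆ C) * U A * V (A ∆ C) := rfl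

def character (t : Finset (Fin (p + q))) : Dl p q →+* ℂ where
  toFun U := ∑ B, charOnBasis p t B * U B
  map_one' := by
    rw [one_def, Finset.sum_eq_single ∅] <;> simp +contextual [one', charOnBasis]
  map_mul' U V := by
    change ∑ C, charOnBasis p t C * ((U * V) C : ℂ)
      = (∑ A, charOnBasis p t A * U A) * ∑ B, charOnBasis p t B * V B
    rw [Finset.sum_mul_sum]
    simp only [mul_apply, Complex.ofReal_sum, Complex.ofReal_mul, Finset.mul_sum]
    rw [Finset.sum_comm]
    refine Finset.sum_congr rfl fun A _ => ?_
    refine Fintype.sum_equiv (symmDiff_right_involutive A).toPerm _ _ fun C => ?_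
    have h := charOnBasis_mul p t A (A ∆ C)
    rw [symmDiff_symmDiff_cancel_left] at h
    simp only [Function.Involutive.coe_toPerm]
    linear_combination -(U A * V (A ∆ C) : ℂ) * h
  map_zero' := by simp
  map_add' U V := by simp [mul_add, Finset.sum_add_distrib]

lemma character_apply (t : Finset (Fin (p + q))) (U : Dl p q) :
    character t U = (charMatrix p (p + q) *ᵥ fun B => (U B : ℂ)) t := rfl

lemma character_smul (t : Finset (Fin (p + q))) (c : ℝ) (U : Dl p q) :
    character t (c • U) = c * character t U := by
  simp only [character_apply, Matrix.mulVec, dotProduct, smul_apply, Complex.ofReal_mul,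
    Finset.mul_sum]
  exact Finset.sum_congr rfl fun B _ => by ring

lemma character_e (t B : Finset (Fin (p + q))) :
    character t (e B : Dl p q) = charOnBasis p t B := by
  rw [character_apply, Matrix.mulVec, dotProduct, Finset.sum_eq_single B] <;>
    simp +contextual [e, charMatrix]

lemma character_conjS (t A : Finset (Fin (p + q))) (U : Dl p q) :
    character t (conjS A U) = character (t ∆ A) U := by
  simp only [character_apply, Matrix.mulVec, dotProduct, charMatrix, Matrix.of_apply,
    charOnBasis_symmDiff, conjS]
  exact Finset.sum_congr rfl fun B _ => by push_cast; ring

lemma character_injective {U V : Dl p q} (h : ∀ t, character t U = character t V) : U = V := by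
  have := Matrix.mulVec_injective_of_det_ne_zero (det_charMatrix_ne_zero p (n := p + q))
    (funext h)
  funext B
  exact_mod_cast congrFun this B

lemma charMatrix_mul_rep (U : Dl p q) :
    charMatrix p (p + q) * (rep U).map Complex.ofReal
      = Matrix.diagonal (fun t => character t U) * charMatrix p (p + q) := by
  ext t B
  rw [Matrix.diagonal_mul, charMatrix, Matrix.of_apply, ← character_e, ← map_mul]
  rfl

lemma Det_eq_prod_character (U : Dl p q) : (Det U : ℂ) = ∏ t, character t U := by
  have h := congrArg Matrix.det (charMatrix_mul_rep U)
  rw [Matrix.det_mul, Matrix.det_mul, Matrix.det_diagonal, mul_comm] at h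
  rw [Det, show ((rep U).det : ℂ) = ((rep U).map Complex.ofReal).det from
    RingHom.map_det Complex.ofRealHom (rep U)]
  exact mul_right_cancel₀ (det_charMatrix_ne_zero p) h

lemma mul_Adj (U : Dl p q) : U * Adj U = Det U • 1 := by
  refine character_injective fun t => ?_
  rw [character_smul, map_one, mul_one, Det_eq_prod_character, map_mul, Adj, map_prod]
  simp only [character_conjS]
  rw [← Fintype.prod_equiv (symmDiff_right_involutive t).toPerm (fun A => character (t ∆ A) U)
    _ fun A => rfl, ← Finset.mul_prod_erase _ _ (Finset.mem_univ ∅)]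
  congr 1
  rw [← Finset.bot_eq_empty, symmDiff_bot]

lemma mul_inv_Det_smul_Adj {U : Dl p q} (h : Det U ≠ 0) : U * ((Det U)⁻¹ • Adj U) = 1 := by
  rw [mul_smul_comm, mul_Adj, smul_smul, inv_mul_cancel₀ h, one_smul]

lemma isUnit_iff_Det_ne_zero (U : Dl p q) : IsUnit U ↔ Det U ≠ 0 := by
  refine ⟨fun hU hDet => ?_, fun h => .of_mul_eq_one _ (mul_inv_Det_smul_Adj h)⟩
  have hprod := Det_eq_prod_character U
  rw [hDet, Complex.ofReal_zero, eq_comm, Finset.prod_eq_zero_iff] at hprod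
  obtain ⟨t, -, ht⟩ := hprod
  exact (hU.map (character t)).ne_zero ht

end Dl

/-- `U` is invertible iff `Det(U) ≠ 0`, and in that case
`U⁻¹ = Adj(U)/Det(U)` where `Adj(U)` is the product of all conjugates of `U` other than
`U` itself. -/
theorem inverse_formula (p q : ℕ) (U : Dl p q) :
    (IsUnit U ↔ Dl.Det U ≠ 0) ∧
    (Dl.Det U ≠ 0 → U * ((Dl.Det U)⁻¹ • Dl.Adj U) = 1) :=
  ⟨Dl.isUnit_iff_Det_ne_zero U, Dl.mul_inv_Det_smul_Adj⟩
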